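/- Let C ⊆ ℝⁿ⁺¹ be a pointed closed semialgebraic convex cone with nonempty interior, and let C∨ = {ℓ ∈ ℝⁿ⁺¹ : ⟨ℓ, x⟩ ≥ 0 for all x ∈ C} be its dual cone. Let ℓ₀ ∈ frontier C∨ with ℓ₀ ≠ 0, and suppose there exists a polynomial p ∈ ℝ[x₀,…,xₙ] vanishing identically on frontier C∨ with ∇p(ℓ₀) ≠ 0. Then the face of C supported by ℓ₀ is an extreme ray: there exists x₀ ∈ C, x₀ ≠ 0, such that {x ∈ C : ⟨ℓ₀, x⟩ = 0} = {t • x₀ : t ≥ 0}, and x₀ spans an extreme ray of C. -/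

import Mathlib

open MvPolynomial

/-- A set is semialgebraic if it is a finite union of basic sets
`{x : p(x) = 0, q₁(x) > 0, …, q_m(x) > 0}`. -/
def IsSemialgebraic {n : ℕ} (S : Set (Fin n → ℝ)) : Prop :=
  ∃ (N : ℕ) (m : Fin N → ℕ)
    (p : Fin N → MvPolynomial (Fin n) ℝ)
    (q : (i : Fin N) → Fin (m i) → MvPolynomial (Fin n) ℝ),
    S = ⋃ i, {x | eval x (p i) = 0 ∧ ∀ j, 0 < eval x (q i j)}

/-- The vanishing ideal of a subset of ℝⁿ. -/
noncomputable def polyVanishingIdeal {n : ℕ} (T : Set (Fin n → ℝ)) : Ideal (MvPolynomial (Fin n) ℝ) where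
  carrier := {p | ∀ x ∈ T, eval x p = 0}
  add_mem' := by
    intro a b ha hb x hx
    simp [map_add, ha x hx, hb x hx]
  zero_mem' := by intro x hx; simp
  smul_mem' := by
    intro c p hp x hx
    simp [smul_eq_mul, hp x hx]

/-- The real zero set of an ideal of polynomials. -/
def realZeroSet {n : ℕ} (I : Ideal (MvPolynomial (Fin n) ℝ)) : Set (Fin n → ℝ) :=
  {x | ∀ p ∈ I, eval x p = 0}

/-- The gradient of a polynomial at a point. -/
noncomputable def grad {n : ℕ} (p : MvPolynomial (Fin n) ℝ) (z : Fin n → ℝ) : Fin n → ℝ :=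
  fun i => eval z (pderiv i p)

/-- The standard inner product on ℝⁿ. -/
def dot {n : ℕ} (a b : Fin n → ℝ) : ℝ := ∑ i, a i * b i

/-- The polar (dual convex body) of a set. -/
def polarBody {n : ℕ} (C : Set (Fin n → ℝ)) : Set (Fin n → ℝ) :=
  {ℓ | ∀ x ∈ C, -1 ≤ dot ℓ x}

/-- The dual cone of a set. -/
def dualCone {n : ℕ} (C : Set (Fin n → ℝ)) : Set (Fin n → ℝ) :=
  {ℓ | ∀ x ∈ C, 0 ≤ dot ℓ x}

/-- A pointed convex cone: convex, closed under nonnegative scaling, containing no line. -/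
def IsPointedCone {n : ℕ} (C : Set (Fin n → ℝ)) : Prop :=
  Convex ℝ C ∧ (∀ x ∈ C, ∀ t : ℝ, 0 ≤ t → t • x ∈ C) ∧ C ∩ (-C) = {0}

/-- A nonzero vector `v` spans an extreme ray of the cone `K` if whenever `y + z = v` with
`y, z ∈ K`, both `y` and `z` are nonnegative multiples of `v`. -/
def SpansExtremeRay {n : ℕ} (K : Set (Fin n → ℝ)) (v : Fin n → ℝ) : Prop :=
  v ≠ 0 ∧ v ∈ K ∧ ∀ y ∈ K, ∀ z ∈ K, y + z = v →
    (∃ t : ℝ, 0 ≤ t ∧ y = t • v) ∧ ∃ t : ℝ, 0 ≤ t ∧ z = t • v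

/-- The span of the gradients at `z` of the polynomials in `P`. -/
noncomputable def gradSpan {n : ℕ} (P : Ideal (MvPolynomial (Fin n) ℝ)) (z : Fin n → ℝ) :
    Submodule ℝ (Fin n → ℝ) :=
  Submodule.span ℝ {v | ∃ p ∈ P, v = grad p z}

open Set Filter Topology

/-!
The face `{x ∈ C | ⟨ℓ₀, x⟩ = 0}` consists of the `x ∈ C` whose functional `ℓ ↦ ⟨ℓ, x⟩` supports
the dual cone `D = C∨` at `ℓ₀`. Near `ℓ₀` the frontier of `D` lies on the hypersurface `p = 0`,
which is smooth there, and this forces every supporting functional to be a multiple of `∇p(ℓ₀)`: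
if one took a negative value on a tangent direction `v`, the points `ℓ₀ + t v` would lie outside
`D`, a segment of length `O(t)` towards an interior point `e` with `∇p(ℓ₀) · (e - ℓ₀) ≠ 0` would
cross the frontier of `D`, and `p` would not vanish at the crossing to first order in `t`.
So the face lies on a line, and since `C` is pointed it is a single ray, which is then extreme.
The face is nonzero because a functional strictly positive on `C ∖ {0}` is, by compactness of
the unit sphere of `C`, interior to `D`; and `D` has interior at all because `C` is pointed and
closed, so equals its double dual.
-/

theorem IsPreconnected.inter_frontier_nonempty {X : Type*} [TopologicalSpace X] {s t : Set X}
    (hs : IsPreconnected s) (hst : (s ∩ t).Nonempty) (hst' : (s \ t).Nonempty) :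
    (s ∩ frontier t).Nonempty := by
  by_contra! h
  have hcover : s ⊆ interior t ∪ (closure t)ᶜ := fun x hx => by
    by_cases hx' : x ∈ closure t
    · exact .inl (by by_contra hi; exact h.subset ⟨hx, hx', hi⟩)
    · exact .inr hx'
  obtain ⟨x, -, hx, hx'⟩ := hs _ _ isOpen_interior isClosed_closure.isOpen_compl hcover
    (let ⟨x, hxs, hxt⟩ := hst; ⟨x, hxs, (hcover hxs).resolve_right (· (subset_closure hxt))⟩)
    (let ⟨x, hxs, hxt⟩ := hst'; ⟨x, hxs, (hcover hxs).resolve_left (hxt <| interior_subset ·)⟩)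
  exact hx' (interior_subset_closure hx)

section RegularFrontierPoint

variable {E : Type*} [NormedAddCommGroup E] [NormedSpace ℝ E] {D : Set E}

theorem exists_pos_add_smul_mem_of_mem_interior {e : E} (he : e ∈ interior D) (v : E) :
    ∃ κ : ℝ, 0 < κ ∧ e + κ • v ∈ D := by
  have hcont : Tendsto (fun κ : ℝ => e + κ • v) (𝓝[>] 0) (𝓝 e) := by
    have : Continuous (fun κ : ℝ => e + κ • v) := by fun_prop
    simpa using (this.tendsto 0).mono_left nhdsWithin_le_nhds
  obtain ⟨κ, hκD, hκ⟩ := ((hcont.eventually (mem_interior_iff_mem_nhds.1 he)).and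
    self_mem_nhdsWithin).exists
  exact ⟨κ, hκ, hκD⟩

theorem exists_mem_interior_apply_sub_ne {φ : E →L[ℝ] ℝ} (hφ : φ ≠ 0)
    (hD : (interior D).Nonempty) (l₀ : E) : ∃ e ∈ interior D, φ (e - l₀) ≠ 0 := by
  obtain ⟨e, he⟩ := hD
  obtain ⟨u, hu⟩ : ∃ u, φ u ≠ 0 := by by_contra! h; exact hφ (ContinuousLinearMap.ext h)
  obtain ⟨κ, hκ, hκu⟩ :=
    exists_pos_add_smul_mem_of_mem_interior (by rwa [interior_interior]) u
  by_cases h : φ (e - l₀) = 0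
  · refine ⟨e + κ • u, hκu, ?_⟩
    rw [add_sub_right_comm, map_add, h, map_smul, zero_add, smul_eq_mul]
    exact mul_ne_zero hκ.ne' hu
  · exact ⟨e, he, h⟩

theorem exists_mem_frontier_add_smul_sub {l₀ e v : E} {κ t : ℝ} (hD : Convex ℝ D) (hl₀ : l₀ ∈ D)
    (hκ : 0 < κ) (hev : e + κ • v ∈ D) (ht : 0 ≤ t) (htκ : t ≤ κ) (hout : l₀ + t • v ∉ D) :
    ∃ s ∈ Icc 0 (t / κ), l₀ + t • v + s • (e - l₀) ∈ frontier D := by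
  set γ : ℝ → E := fun s => l₀ + t • v + s • (e - l₀)
  have hend : γ (t / κ) ∈ D := by
    have := hD hl₀ hev (sub_nonneg.2 ((div_le_one hκ).2 htκ)) (div_nonneg ht hκ.le)
      (sub_add_cancel 1 _)
    convert this using 1
    simp only [γ, smul_add, smul_smul, div_mul_cancel₀ t hκ.ne', sub_smul, smul_sub, one_smul]
    abel
  have hγ : Continuous γ := by fun_prop
  obtain ⟨_, ⟨s, hs, rfl⟩, hfr⟩ :=
    (isPreconnected_Icc.image γ hγ.continuousOn).inter_frontier_nonempty
    ⟨γ (t / κ), ⟨t / κ, right_mem_Icc.2 (div_nonneg ht hκ.le), rfl⟩, hend⟩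
    ⟨γ 0, ⟨0, left_mem_Icc.2 (div_nonneg ht hκ.le), rfl⟩, by simpa [γ] using hout⟩
  exact ⟨s, hs, hfr⟩

theorem nonneg_of_supports_at_regular_frontier_point (hD : Convex ℝ D) (hDc : IsClosed D)
    {f : E → ℝ} {φ : E →L[ℝ] ℝ} {ψ : E →ₗ[ℝ] ℝ} {l₀ e v : E} {κ : ℝ}
    (hf : ∀ l ∈ frontier D, f l = 0) (hl₀ : l₀ ∈ frontier D) (hφ : HasFDerivAt f φ l₀)
    (hψ : ∀ l ∈ D, ψ l₀ ≤ ψ l) (he : φ (e - l₀) ≠ 0) (hκ : 0 < κ) (hev : e + κ • v ∈ D)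
    (hv : φ v = 0) : 0 ≤ ψ v := by
  by_contra! hψv
  set a := e - l₀
  set M := ‖v‖ + ‖a‖ / κ
  have hM : 0 ≤ M := by positivity
  set ε := -ψ v * |φ a| / (M * |ψ a| + 1)
  have hε : 0 < ε := div_pos (mul_pos (neg_pos.2 hψv) (abs_pos.2 he)) (by positivity)
  obtain ⟨δ, hδ, hsmall⟩ := Metric.eventually_nhds_iff.1 (hφ.isLittleO.def hε)
  set t := min κ (δ / (M + 1))
  have ht : 0 < t := lt_min hκ (by positivity)
  have htM : t * M < δ := calc
    t * M ≤ δ / (M + 1) * M := mul_le_mul_of_nonneg_right (min_le_right _ _) hM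
    _ < δ := by
      rw [div_mul_eq_mul_div, div_lt_iff₀ (by positivity)]
      exact mul_lt_mul_of_pos_left (lt_add_one M) hδ
  have hout : l₀ + t • v ∉ D := fun h => by
    have := hψ _ h
    rw [map_add, map_smul, smul_eq_mul] at this
    linarith [mul_neg_of_pos_of_neg ht hψv]
  obtain ⟨s, ⟨hs0, hsκ⟩, hb⟩ := exists_mem_frontier_add_smul_sub hD
    (hDc.frontier_subset hl₀) hκ hev ht.le (min_le_left _ _) hout
  set b := l₀ + t • v + s • a
  have hsupp : t * -ψ v ≤ s * ψ a := by
    have := hψ b (hDc.frontier_subset hb)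
    simp only [b, map_add, map_smul, smul_eq_mul] at this
    linarith
  have hnorm : ‖b - l₀‖ ≤ t * M := calc
    ‖b - l₀‖ ≤ t * ‖v‖ + s * ‖a‖ := by
      rw [show b - l₀ = t • v + s • a by simp only [b]; abel]
      refine (norm_add_le _ _).trans_eq ?_
      rw [norm_smul, norm_smul, Real.norm_of_nonneg ht.le, Real.norm_of_nonneg hs0]
    _ ≤ t * ‖v‖ + t / κ * ‖a‖ := by gcongr
    _ = t * M := by ring
  have hlin : |s * φ a| ≤ ε * ‖b - l₀‖ := by
    have := hsmall (show dist b l₀ < δ by rw [dist_eq_norm]; linarith)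
    simpa [hf b hb, hf l₀ hl₀, b, a, hv] using this
  have key : -ψ v * |φ a| ≤ ε * M * |ψ a| := le_of_mul_le_mul_left (calc
    t * (-ψ v * |φ a|) ≤ |s * ψ a| * |φ a| := by
      rw [← mul_assoc]; gcongr; exact hsupp.trans (le_abs_self _)
    _ = |ψ a| * |s * φ a| := by rw [abs_mul, abs_mul]; ring
    _ ≤ |ψ a| * (ε * (t * M)) := by gcongr; exact hlin.trans (by gcongr)
    _ = t * (ε * M * |ψ a|) := by ring) ht
  have hεM : ε * M * |ψ a| + ε = -ψ v * |φ a| := by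
    rw [mul_assoc, ← mul_add_one, div_mul_cancel₀ _ (by positivity)]
  linarith

theorem apply_eq_zero_of_supports_at_regular_frontier_point (hD : Convex ℝ D) (hDc : IsClosed D)
    {f : E → ℝ} {φ : E →L[ℝ] ℝ} {ψ : E →ₗ[ℝ] ℝ} {l₀ e v : E}
    (hf : ∀ l ∈ frontier D, f l = 0) (hl₀ : l₀ ∈ frontier D) (hφ : HasFDerivAt f φ l₀)
    (hψ : ∀ l ∈ D, ψ l₀ ≤ ψ l) (he : e ∈ interior D) (he' : φ (e - l₀) ≠ 0) (hv : φ v = 0) :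
    ψ v = 0 := by
  obtain ⟨κ, hκ, hκv⟩ := exists_pos_add_smul_mem_of_mem_interior he v
  obtain ⟨κ', hκ', hκ'v⟩ := exists_pos_add_smul_mem_of_mem_interior he (-v)
  have h₁ := nonneg_of_supports_at_regular_frontier_point hD hDc hf hl₀ hφ hψ he' hκ hκv hv
  have h₂ := nonneg_of_supports_at_regular_frontier_point hD hDc hf hl₀ hφ hψ he' hκ' hκ'v
    (by rw [map_neg, hv, neg_zero])
  rw [map_neg] at h₂
  linarith

end RegularFrontierPoint

variable {m : ℕ}

theorem dot_eq_dotProduct (a b : Fin m → ℝ) : dot a b = a ⬝ᵥ b := rfl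

theorem continuous_dot : Continuous fun p : (Fin m → ℝ) × (Fin m → ℝ) => dot p.1 p.2 := by
  unfold dot; fun_prop

theorem dot_eq_dotProductEquiv_symm (f : Module.Dual ℝ (Fin m → ℝ)) (x : Fin m → ℝ) :
    dot ((dotProductEquiv ℝ (Fin m)).symm f) x = f x := by
  conv_rhs => rw [← (dotProductEquiv ℝ (Fin m)).apply_symm_apply f]
  rfl

theorem zero_mem_dualCone (C : Set (Fin m → ℝ)) : 0 ∈ dualCone C := fun x _ => by
  simp [dot_eq_dotProduct]

theorem convex_dualCone (C : Set (Fin m → ℝ)) : Convex ℝ (dualCone C) :=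
  fun a ha b hb s t hs ht _ x hx => by
    simp only [dot_eq_dotProduct, add_dotProduct, smul_dotProduct, smul_eq_mul]
    exact add_nonneg (mul_nonneg hs (ha x hx)) (mul_nonneg ht (hb x hx))

theorem isClosed_dualCone (C : Set (Fin m → ℝ)) : IsClosed (dualCone C) := by
  have : dualCone C = ⋂ x ∈ C, (fun l => dot l x) ⁻¹' Ici 0 := by ext; simp [dualCone]
  rw [this]
  exact isClosed_biInter fun x _ =>
    isClosed_Ici.preimage (continuous_dot.comp (continuous_id.prodMk continuous_const))

theorem dualCone_dualCone_subset {C : Set (Fin m → ℝ)} (hconv : Convex ℝ C)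
    (hsmul : ∀ x ∈ C, ∀ t : ℝ, 0 ≤ t → t • x ∈ C) (h0 : 0 ∈ C) (hcl : IsClosed C) :
    dualCone (dualCone C) ⊆ C := by
  have hadd {x y} (hx : x ∈ C) (hy : y ∈ C) : x + y ∈ C := by
    have := hsmul _ (hconv hx hy (by norm_num : (0 : ℝ) ≤ 1 / 2) (by norm_num : (0 : ℝ) ≤ 1 / 2)
      (by norm_num)) 2 zero_le_two
    rwa [smul_add, smul_smul, smul_smul, show (2 : ℝ) * (1 / 2) = 1 by norm_num, one_smul,
      one_smul] at this
  let K : ProperCone ℝ (Fin m → ℝ) :=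
    { carrier := C
      add_mem' := hadd
      zero_mem' := h0
      smul_mem' := fun c x hx => hsmul x hx c c.2
      isClosed' := hcl }
  intro u hu
  by_contra huC
  obtain ⟨f, hfC, hfu⟩ := K.hyperplane_separation_point (x₀ := u) huC
  set l := (dotProductEquiv ℝ (Fin m)).symm f.toLinearMap
  have hl : l ∈ dualCone C := fun x hx => (dot_eq_dotProductEquiv_symm _ x).trans_ge (hfC x hx)
  have hlu : dot l u < 0 := (dot_eq_dotProductEquiv_symm _ u).trans_lt hfu
  rw [dot_eq_dotProduct, dotProduct_comm] at hlu
  exact (hu l hl).not_gt hlu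

theorem nonempty_interior_dualCone {C : Set (Fin m → ℝ)} (hcl : IsClosed C)
    (hC : IsPointedCone C) : (interior (dualCone C)).Nonempty := by
  obtain ⟨hconv, hsmul, hpointed⟩ := hC
  have h0 : (0 : Fin m → ℝ) ∈ C := (hpointed.symm.subset rfl).1
  by_contra hempty
  have hspan : vectorSpan ℝ (dualCone C) < ⊤ := by
    rwa [lt_top_iff_ne_top, Ne,
      ← AffineSubspace.affineSpan_eq_top_iff_vectorSpan_eq_top_of_nonempty ℝ _ _
        ⟨0, zero_mem_dualCone C⟩,
      ← (convex_dualCone C).interior_nonempty_iff_affineSpan_eq_top]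
  obtain ⟨f, hf0, hker⟩ := (vectorSpan ℝ (dualCone C)).exists_le_ker_of_lt_top hspan
  set u := (dotProductEquiv ℝ (Fin m)).symm f
  have hu : ∀ l ∈ dualCone C, dot u l = 0 := fun l hl => by
    rw [dot_eq_dotProductEquiv_symm]
    simpa using hker (vsub_mem_vectorSpan ℝ hl (zero_mem_dualCone C))
  have huC : u ∈ C :=
    dualCone_dualCone_subset hconv hsmul h0 hcl fun l hl => (hu l hl).ge
  have hnuC : -u ∈ C := dualCone_dualCone_subset hconv hsmul h0 hcl fun l hl => by
    rw [dot_eq_dotProduct, neg_dotProduct, ← dot_eq_dotProduct, hu l hl, neg_zero]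
  have hu0 : u = 0 := by
    rw [← mem_singleton_iff, ← hpointed]
    exact ⟨huC, by simpa using hnuC⟩
  exact hf0 ((dotProductEquiv ℝ (Fin m)).symm.map_eq_zero_iff.1 hu0)

theorem mem_interior_dualCone_of_pos {C : Set (Fin m → ℝ)} (hcl : IsClosed C)
    (hsmul : ∀ x ∈ C, ∀ t : ℝ, 0 ≤ t → t • x ∈ C) {l : Fin m → ℝ}
    (hpos : ∀ x ∈ C, x ≠ 0 → 0 < dot l x) : l ∈ interior (dualCone C) := by
  have hK : IsCompact (C ∩ Metric.sphere 0 1) := (isCompact_sphere 0 1).inter_left hcl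
  have hev : ∀ᶠ l' in 𝓝 l, ∀ k ∈ C ∩ Metric.sphere 0 1, 0 < dot l' k :=
    hK.eventually_forall_of_forall_eventually fun k hk =>
      (isOpen_lt continuous_const continuous_dot).mem_nhds
        (hpos k hk.1 (ne_zero_of_mem_unit_sphere ⟨k, hk.2⟩))
  refine mem_interior_iff_mem_nhds.2 (hev.mono fun l' hl' x hx => ?_)
  rcases eq_or_ne x 0 with rfl | hx0
  · simp [dot_eq_dotProduct]
  · have := hl' (‖x‖⁻¹ • x) ⟨hsmul x hx _ (by positivity), by simp [norm_smul, hx0]⟩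
    rw [dot_eq_dotProduct, dotProduct_smul, smul_eq_mul] at this
    exact (pos_of_mul_pos_right this (by positivity)).le

theorem exists_ne_zero_dot_eq_zero_of_mem_frontier {C : Set (Fin m → ℝ)} (hcl : IsClosed C)
    (hsmul : ∀ x ∈ C, ∀ t : ℝ, 0 ≤ t → t • x ∈ C) {l₀ : Fin m → ℝ}
    (hl₀ : l₀ ∈ frontier (dualCone C)) : ∃ x ∈ C, x ≠ 0 ∧ dot l₀ x = 0 := by
  by_contra! h
  exact hl₀.2 (mem_interior_dualCone_of_pos hcl hsmul fun x hx hx0 =>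
    ((isClosed_dualCone C).frontier_subset hl₀ x hx).lt_of_ne (h x hx hx0).symm)

theorem MvPolynomial.hasFDerivAt_eval (p : MvPolynomial (Fin m) ℝ) (z : Fin m → ℝ) :
    HasFDerivAt (fun x => eval x p)
      (∑ i, grad p z i • ContinuousLinearMap.proj (R := ℝ) (φ := fun _ => ℝ) i) z := by
  induction p using MvPolynomial.induction_on with
  | C a => simpa [grad] using hasFDerivAt_const a z
  | add p q hp hq =>
    simp only [map_add]
    refine (hp.add hq).congr_fderiv ?_
    simp [grad, add_smul, Finset.sum_add_distrib]
  | mul_X p i hp =>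
    simp only [map_mul, eval_X]
    refine (hp.mul (hasFDerivAt_apply i z)).congr_fderiv ?_
    ext v
    simp [grad, pderiv_X, Pi.single_apply, apply_ite (eval z), add_mul, Finset.sum_add_distrib,
      Finset.mul_sum, mul_assoc]

theorem exists_eq_smul_of_dot_eq_zero {x g : Fin m → ℝ} (h : ∀ v, dot g v = 0 → dot x v = 0) :
    ∃ c : ℝ, x = c • g := by
  set c := x ⬝ᵥ g / (g ⬝ᵥ g)
  have hgv : g ⬝ᵥ (x - c • g) = 0 := by
    rw [dotProduct_sub, dotProduct_smul, smul_eq_mul, dotProduct_comm g x,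
      div_mul_cancel_of_imp fun h => by simp [dotProduct_self_eq_zero.1 h], sub_self]
  have hxv : x ⬝ᵥ (x - c • g) = 0 := h _ hgv
  refine ⟨c, sub_eq_zero.1 (dotProduct_self_eq_zero.1 ?_)⟩
  rw [sub_dotProduct, hxv, smul_dotProduct, hgv, smul_zero, sub_zero]

theorem exists_eq_smul_grad_of_mem_face {C : Set (Fin m → ℝ)} (hcl : IsClosed C)
    (hC : IsPointedCone C) {p : MvPolynomial (Fin m) ℝ} {l₀ : Fin m → ℝ}
    (hl₀ : l₀ ∈ frontier (dualCone C)) (hp : ∀ l ∈ frontier (dualCone C), eval l p = 0)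
    (hg : grad p l₀ ≠ 0) {x : Fin m → ℝ} (hx : x ∈ C) (hface : dot l₀ x = 0) :
    ∃ c : ℝ, x = c • grad p l₀ := by
  set φ := ∑ i, grad p l₀ i • ContinuousLinearMap.proj (R := ℝ) (φ := fun _ => ℝ) i
  have hφ (v : Fin m → ℝ) : φ v = dot (grad p l₀) v := by simp [φ, dot]
  have hφ0 : φ ≠ 0 := fun h => hg (by simpa [h, dot_eq_dotProduct] using (hφ (grad p l₀)).symm)
  obtain ⟨e, he, he'⟩ :=
    exists_mem_interior_apply_sub_ne hφ0 (nonempty_interior_dualCone hcl hC) l₀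
  refine exists_eq_smul_of_dot_eq_zero fun v hv => ?_
  refine apply_eq_zero_of_supports_at_regular_frontier_point (convex_dualCone C)
    (isClosed_dualCone C) hp hl₀ (hasFDerivAt_eval p l₀) (ψ := dotProductEquiv ℝ (Fin m) x)
    (fun l hl => ?_) he he' ((hφ v).trans hv)
  simpa [dotProduct_comm x, ← dot_eq_dotProduct, hface] using hl x hx

theorem face_eq_ray_of_parallel {C : Set (Fin m → ℝ)}
    (hsmul : ∀ x ∈ C, ∀ t : ℝ, 0 ≤ t → t • x ∈ C) (hpointed : C ∩ -C = {0})
    {l₀ g x₀ : Fin m → ℝ} (hpar : ∀ x ∈ C, dot l₀ x = 0 → ∃ c : ℝ, x = c • g) (hx₀ : x₀ ∈ C)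
    (hx₀0 : x₀ ≠ 0) (hx₀f : dot l₀ x₀ = 0) :
    {x | x ∈ C ∧ dot l₀ x = 0} = {y | ∃ t : ℝ, 0 ≤ t ∧ y = t • x₀} := by
  obtain ⟨c₀, rfl⟩ := hpar x₀ hx₀ hx₀f
  have hc₀ : c₀ ≠ 0 := by rintro rfl; simp at hx₀0
  ext z
  constructor
  · rintro ⟨hz, hzf⟩
    obtain ⟨c, rfl⟩ := hpar z hz hzf
    have hz' : c • g = (c / c₀) • c₀ • g := by rw [smul_smul, div_mul_cancel₀ _ hc₀]
    refine ⟨c / c₀, ?_, hz'⟩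
    by_contra! hneg
    have : c • g ∈ C ∩ -C :=
      ⟨hz, by rw [Set.mem_neg, hz', ← neg_smul]; exact hsmul _ hx₀ _ (by linarith)⟩
    rw [hpointed, mem_singleton_iff, hz'] at this
    exact hneg.ne ((smul_eq_zero.1 this).resolve_right hx₀0)
  · rintro ⟨t, ht, rfl⟩
    refine ⟨hsmul _ hx₀ t ht, ?_⟩
    rw [dot_eq_dotProduct, dotProduct_smul, ← dot_eq_dotProduct, hx₀f, smul_zero]

theorem spansExtremeRay_of_face_eq_ray {C : Set (Fin m → ℝ)} {l₀ x₀ : Fin m → ℝ}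
    (hl₀ : l₀ ∈ dualCone C) (hx₀ : x₀ ∈ C) (hx₀0 : x₀ ≠ 0)
    (hface : {x | x ∈ C ∧ dot l₀ x = 0} = {y | ∃ t : ℝ, 0 ≤ t ∧ y = t • x₀}) :
    SpansExtremeRay C x₀ := by
  have hx₀f : dot l₀ x₀ = 0 := (hface.symm.subset ⟨1, zero_le_one, (one_smul _ _).symm⟩).2
  refine ⟨hx₀0, hx₀, fun y hy z hz hyz => ?_⟩
  have hsum : dot l₀ y + dot l₀ z = 0 := by
    rw [dot_eq_dotProduct, dot_eq_dotProduct, ← dotProduct_add, hyz, ← dot_eq_dotProduct, hx₀f]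
  have hy₀ := hl₀ y hy
  have hz₀ := hl₀ z hz
  exact ⟨hface.subset ⟨hy, by linarith⟩, hface.subset ⟨hz, by linarith⟩⟩

theorem face_of_regular_point_is_extreme_ray_general {n : ℕ} (C : Set (Fin (n + 1) → ℝ))
    (hclosed : IsClosed C) (hcone : IsPointedCone C)
    (l0 : Fin (n + 1) → ℝ) (hl0 : l0 ∈ frontier (dualCone C))
    (hreg : ∃ p : MvPolynomial (Fin (n + 1)) ℝ,
      (∀ l ∈ frontier (dualCone C), MvPolynomial.eval l p = 0) ∧ grad p l0 ≠ 0) :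
    ∃ x₀ ∈ C, x₀ ≠ 0 ∧
      {x | x ∈ C ∧ dot l0 x = 0} = {y | ∃ t : ℝ, 0 ≤ t ∧ y = t • x₀} ∧
      SpansExtremeRay C x₀ := by
  obtain ⟨p, hp, hg⟩ := hreg
  obtain ⟨x₀, hx₀, hx₀0, hx₀f⟩ :=
    exists_ne_zero_dot_eq_zero_of_mem_frontier hclosed hcone.2.1 hl0
  have hface := face_eq_ray_of_parallel hcone.2.1 hcone.2.2
    (fun x hx hxf => exists_eq_smul_grad_of_mem_face hclosed hcone hl0 hp hg hx hxf) hx₀ hx₀0 hx₀f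
  exact ⟨x₀, hx₀, hx₀0, hface,
    spansExtremeRay_of_face_eq_ray ((isClosed_dualCone C).frontier_subset hl0) hx₀ hx₀0 hface⟩

/-- A nonzero regular real point of the algebraic boundary of the dual cone
supports a face of `C` which is an extreme ray. -/
theorem face_of_regular_point_is_extreme_ray {n : ℕ} (C : Set (Fin (n + 1) → ℝ))
    (hsa : IsSemialgebraic C) (hclosed : IsClosed C) (hcone : IsPointedCone C)
    (hint : (interior C).Nonempty)
    (l0 : Fin (n + 1) → ℝ) (hl0 : l0 ∈ frontier (dualCone C)) (hl0ne : l0 ≠ 0)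
    (hreg : ∃ p : MvPolynomial (Fin (n + 1)) ℝ,
      (∀ l ∈ frontier (dualCone C), MvPolynomial.eval l p = 0) ∧ grad p l0 ≠ 0) :
    ∃ x₀ ∈ C, x₀ ≠ 0 ∧
      {x | x ∈ C ∧ dot l0 x = 0} = {y | ∃ t : ℝ, 0 ≤ t ∧ y = t • x₀} ∧
      SpansExtremeRay C x₀ :=
  face_of_regular_point_is_extreme_ray_general C hclosed hcone l0 hl0 hreg
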